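/- Let π be a uniformly random bijection E → {1,…,m} on the edge set of a finite hypergraph H = (V,E), run the sequential greedy matching on π, and fix an edge d ∈ E. Let R = π(p(d)) be the step at which d is removed from the free set. Then for every r ∈ {1,…,m} and every injective sequence σ = (σ_1,…,σ_{r−1}) of edges such that the event A = { π(σ_i) = i for all i < r, and R = r } has positive probability, conditioned on A the matched edge p(d) is uniformly distributed over P, where P is the set of edges incident to d (including d) that are still free after the greedy process handles σ_1,…,σ_{r−1} in order. -/

import Mathlib

/-!
For a uniformly random priority bijection `π : E ≃ Fin m` (step `r ∈ {1,…,m}`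
of the greedy process corresponds to the `π`-value `r - 1`), conditioned on
the event `A` that the first `r - 1` processed edges are `σ₁, …, σ_{r-1}` (in
this order) and that the fixed edge `d` is removed from the free set exactly
at step `r`, the matched edge `p(d)` is uniformly distributed over the set `P`
of edges incident to `d` (including `d`) that are still free after the greedy
process handles `σ₁, …, σ_{r-1}`.  Uniformity is expressed by counting:
for every `x ∈ P`, `|A ∩ {p(d) = x}| * |P| = |A|`.
-/

open Finset

open scoped Classical

variable {V E : Type*}

/-- Two hyperedges are incident if they share a vertex. -/
def Incident [DecidableEq V] (vert : E → Finset V) (e f : E) : Prop :=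
  (vert e ∩ vert f).Nonempty

/-- `Matched vert π e` holds iff the sequential greedy matching (processing the
edges in increasing `π`-order, selecting an edge iff it is still free when
processed) selects `e`. -/
def Matched [DecidableEq V] (vert : E → Finset V) (π : E → ℕ) (e : E) : Prop :=
  ∀ f, π f < π e → Incident vert f e → ¬ Matched vert π f
termination_by π e

/-- The matched edge owning `e` (the `π`-least matched edge incident to `e`),
i.e. the matched edge `p(e)` whose sample space `e` belongs to;  `e` is removed
from the free set at the step at which `p(e)` is processed. -/
noncomputable def owner [DecidableEq V] (vert : E → Finset V) (π : E → ℕ) (e : E) : E :=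
  if h : ∃ f, (Matched vert π f ∧ Incident vert f e) ∧
      ∀ f', Matched vert π f' → Incident vert f' e → π f ≤ π f' then
    h.choose
  else e

/-- One step of the greedy process on the free set `F`:  process edge `e`;
if `e` is free it is selected and all free edges incident to it (including `e`
itself) are removed from the free set. -/
noncomputable def stepFree [DecidableEq V] [DecidableEq E]
    (vert : E → Finset V) (F : Finset E) (e : E) : Finset E :=
  if e ∈ F then F.filter fun f => ¬ Incident vert e f else F

/-- The set of free edges after the greedy process handles the edges of the
list `L` in order (starting from all edges free). -/
noncomputable def freeAfter [DecidableEq V] [DecidableEq E] [Fintype E]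
    (vert : E → Finset V) (L : List E) : Finset E :=
  L.foldl (stepFree vert) Finset.univ


/-!
Swapping the priorities of two edges `x, y ∈ P` fixes the first `r - 1` steps, because
edges in `σ` are no longer free while `x` and `y` are. If `p(d) = y` was processed at step `r`,
then after the swap `x` is processed at step `r` while still free, so it is matched, and it
is the first matched edge meeting `d` because `d` was still free before step `r`. The swap is
an involution on `E ≃ Fin m`, so it is a bijection between `A ∩ {p(d) = y}` and
`A ∩ {p(d) = x}`: all fibres of `p(d)` over `P` have the same size.
-/

open Function

section Greedy

variable [DecidableEq V] (vert : E → Finset V)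

theorem incident_self {e : E} (he : (vert e).Nonempty) : Incident vert e e := by
  simpa [Incident] using he

theorem matched_iff (π : E → ℕ) (e : E) :
    Matched vert π e ↔ ∀ f, π f < π e → Incident vert f e → ¬ Matched vert π f := by
  rw [Matched]

theorem exists_matched_incident {d : E} (hd : (vert d).Nonempty) (π : E → ℕ) :
    ∃ f, Matched vert π f ∧ Incident vert f d := by
  by_cases h : Matched vert π d
  · exact ⟨d, h, incident_self vert hd⟩
  · rw [matched_iff] at h
    push Not at h
    obtain ⟨f, -, hfd, hf⟩ := h
    exact ⟨f, hf, hfd⟩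

section Owner

variable [Fintype E]

theorem owner_spec {d : E} (hd : (vert d).Nonempty) (π : E → ℕ) :
    Matched vert π (owner vert π d) ∧ Incident vert (owner vert π d) d ∧
      ∀ f, Matched vert π f → Incident vert f d → π (owner vert π d) ≤ π f := by
  have hex : ∃ f, (Matched vert π f ∧ Incident vert f d) ∧
      ∀ f', Matched vert π f' → Incident vert f' d → π f ≤ π f' := by
    obtain ⟨f₀, hf₀⟩ := exists_matched_incident vert hd π
    obtain ⟨f, hf, hmin⟩ := exists_min_image
      (univ.filter fun f => Matched vert π f ∧ Incident vert f d) π ⟨f₀, by simpa using hf₀⟩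
    simp only [mem_filter, mem_univ, true_and] at hf hmin
    exact ⟨f, hf, fun f' h₁ h₂ => hmin f' ⟨h₁, h₂⟩⟩
  rw [owner, dif_pos hex]
  exact and_assoc.mp hex.choose_spec

theorem owner_eq_of_forall_le {d : E} (hd : (vert d).Nonempty) {π : E → ℕ} (hπ : Injective π)
    {x : E} (hx : Matched vert π x) (hxd : Incident vert x d)
    (hle : ∀ f, Matched vert π f → Incident vert f d → π x ≤ π f) :
    owner vert π d = x := by
  obtain ⟨ho, hod, hole⟩ := owner_spec vert hd π
  exact hπ (le_antisymm (hole x hx hxd) (hle _ ho hod))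

/-- The free set of the greedy process on priorities `π` after its first `n` steps. -/
noncomputable def freeBefore (π : E → ℕ) (n : ℕ) : Finset E :=
  univ.filter fun f => ∀ g, π g < n → Matched vert π g → ¬ Incident vert g f

theorem mem_freeBefore_self_iff (π : E → ℕ) (e : E) :
    e ∈ freeBefore vert π (π e) ↔ Matched vert π e := by
  simp only [freeBefore, mem_filter, mem_univ, true_and, matched_iff vert π e]
  exact ⟨fun h f hf hinc hm => h f hf hm hinc, fun h g hg hm hinc => h g hg hinc hm⟩

end Owner

section FreeSet

variable [DecidableEq E]

theorem stepFree_subset (F : Finset E) (e : E) : stepFree vert F e ⊆ F := by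
  unfold stepFree
  split_ifs
  exacts [filter_subset _ _, Subset.rfl]

theorem foldl_stepFree_subset (L : List E) (F : Finset E) : L.foldl (stepFree vert) F ⊆ F := by
  induction L generalizing F with
  | nil => exact Subset.rfl
  | cons e L ih => exact (ih _).trans (stepFree_subset vert F e)

theorem notMem_stepFree_self {e : E} (he : (vert e).Nonempty) (F : Finset E) :
    e ∉ stepFree vert F e := by
  unfold stepFree
  split_ifs with h
  · simp [incident_self vert he]
  · exact h

variable [Fintype E]

theorem notMem_freeAfter_of_mem {e : E} (he : (vert e).Nonempty) {L : List E} (h : e ∈ L) :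
    e ∉ freeAfter vert L := by
  obtain ⟨L₁, L₂, rfl⟩ := List.append_of_mem h
  rw [freeAfter, List.foldl_append, List.foldl_cons]
  exact fun hmem => notMem_stepFree_self vert he _ (foldl_stepFree_subset vert L₂ _ hmem)

theorem stepFree_freeBefore {π : E → ℕ} (hπ : Injective π) (e : E) :
    stepFree vert (freeBefore vert π (π e)) e = freeBefore vert π (π e + 1) := by
  have hlt : ∀ g, π g < π e + 1 ↔ π g < π e ∨ g = e := fun g => by
    rw [Nat.lt_succ_iff_lt_or_eq, hπ.eq_iff]
  unfold stepFree
  split_ifs with he <;> rw [mem_freeBefore_self_iff] at he <;> ext f <;>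
    simp only [freeBefore, mem_filter, mem_univ, true_and, hlt, or_imp, forall_and,
      forall_eq, he]
  all_goals tauto

theorem freeAfter_eq_freeBefore {π : E → ℕ} (hπ : Injective π) {L : List E}
    (hL : ∀ i (h : i < L.length), π L[i] = i) :
    freeAfter vert L = freeBefore vert π L.length := by
  induction L using List.reverseRecOn with
  | nil => ext; simp [freeAfter, freeBefore]
  | append_singleton L e ih =>
    have hLe : ∀ i (h : i < L.length), π L[i] = i := fun i h => by
      have := hL i (by simp; omega)
      rwa [List.getElem_append_left h] at this
    have he : π e = L.length := by simpa using hL L.length (by simp)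
    rw [freeAfter, List.foldl_append, ← freeAfter, ih hLe, List.foldl_cons, List.foldl_nil,
      ← he, stepFree_freeBefore vert hπ, List.length_append, List.length_singleton, he]

end FreeSet

section Event

variable [DecidableEq E] [Fintype E]

/-- The event `A`, for an arbitrary priority function `π : E → ℕ`. -/
def IsRemovedAfter (π : E → ℕ) (σ : List E) (d : E) : Prop :=
  (∀ i (h : i < σ.length), π σ[i] = i) ∧ π (owner vert π d) = σ.length

variable {vert} {π : E → ℕ} {σ : List E} {d : E}

theorem IsRemovedAfter.mem_freeAfter (hd : (vert d).Nonempty) (hπ : Injective π)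
    (h : IsRemovedAfter vert π σ d) : d ∈ freeAfter vert σ := by
  rw [freeAfter_eq_freeBefore vert hπ h.1, freeBefore, mem_filter]
  refine ⟨mem_univ _, fun g hg hm hgd => ?_⟩
  have := (owner_spec vert hd π).2.2 g hm hgd
  have := h.2
  omega

theorem IsRemovedAfter.owner_mem (hd : (vert d).Nonempty) (hπ : Injective π)
    (h : IsRemovedAfter vert π σ d) :
    owner vert π d ∈ (freeAfter vert σ).filter fun f => Incident vert f d := by
  obtain ⟨ho, hod, -⟩ := owner_spec vert hd π
  rw [mem_filter, freeAfter_eq_freeBefore vert hπ h.1, ← h.2]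
  exact ⟨(mem_freeBefore_self_iff vert π _).2 ho, hod⟩

theorem IsRemovedAfter.swap (hne : ∀ e : E, (vert e).Nonempty) (hπ : Injective π)
    (h : IsRemovedAfter vert π σ d) {x : E}
    (hx : x ∈ (freeAfter vert σ).filter fun f => Incident vert f d) :
    IsRemovedAfter vert (fun e => π (Equiv.swap x (owner vert π d) e)) σ d ∧
      owner vert (fun e => π (Equiv.swap x (owner vert π d) e)) d = x := by
  set y := owner vert π d
  set π' : E → ℕ := fun e => π (Equiv.swap x y e)
  have hπ' : Injective π' := hπ.comp (Equiv.injective _)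
  obtain ⟨hxF, hxd⟩ := mem_filter.mp hx
  have hyF := (mem_filter.mp (h.owner_mem (hne d) hπ)).1
  have hσ' : ∀ i (hi : i < σ.length), π' σ[i] = i := fun i hi => by
    have hx' : σ[i] ≠ x := fun he => notMem_freeAfter_of_mem vert (hne _)
      (List.getElem_mem hi) (he ▸ hxF)
    have hy' : σ[i] ≠ y := fun he => notMem_freeAfter_of_mem vert (hne _)
      (List.getElem_mem hi) (he ▸ hyF)
    simp only [π', Equiv.swap_apply_of_ne_of_ne hx' hy']
    exact h.1 i hi
  have hπ'x : π' x = σ.length := by simp only [π', Equiv.swap_apply_left]; exact h.2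
  have hdF := h.mem_freeAfter (hne d) hπ
  rw [freeAfter_eq_freeBefore vert hπ' hσ', ← hπ'x] at hxF
  rw [freeAfter_eq_freeBefore vert hπ' hσ', freeBefore, mem_filter] at hdF
  have hownx : owner vert π' d = x := by
    refine owner_eq_of_forall_le vert (hne d) hπ' ((mem_freeBefore_self_iff vert π' x).1 hxF)
      hxd fun f hf hfd => ?_
    by_contra! hlt
    exact hdF.2 f (hπ'x ▸ hlt) hf hfd
  exact ⟨⟨hσ', hownx ▸ hπ'x⟩, hownx⟩

end Event

end Greedy

theorem stmt3_general [DecidableEq V] [Fintype E] [DecidableEq E] {m r : ℕ}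
    (vert : E → Finset V) (hne : ∀ e : E, (vert e).Nonempty)
    (d : E)
    (σ : List E) (hσlen : σ.length = r - 1) :
    -- `P`: the edges incident to `d` (including `d`) still free after `σ`
    let P : Finset E := (freeAfter vert σ).filter fun f => Incident vert f d
    -- the event `A`: `π (σ_i) = i` for all `i < r`, and `d` is removed from
    -- the free set at step `r` (i.e. `π (p(d)) = r` in 1-indexed steps)
    let A : Finset (E ≃ Fin m) := Finset.univ.filter fun π : E ≃ Fin m =>
      (∀ i : Fin σ.length, ((π (σ.get i)) : ℕ) = (i : ℕ)) ∧
      ((π (owner vert (fun e => (π e : ℕ)) d)) : ℕ) = r - 1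
    -- `A` has positive probability
    A.Nonempty →
    -- conditioned on `A`, the matched edge `p(d)` is uniform over `P`
    ∀ x ∈ P,
      (A.filter fun π : E ≃ Fin m => owner vert (fun e => (π e : ℕ)) d = x).card * P.card
        = A.card := by
  intro P A _ x hx
  have hinj (π : E ≃ Fin m) : Injective fun e => (π e : ℕ) :=
    Fin.val_injective.comp π.injective
  have hA (π : E ≃ Fin m) : π ∈ A ↔ IsRemovedAfter vert (fun e => (π e : ℕ)) σ d := by
    simp only [A, IsRemovedAfter, mem_filter, mem_univ, true_and, hσlen, Fin.forall_iff,
      List.get_eq_getElem]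
  have hfiber : ∀ y ∈ P, #(A.filter fun π => owner vert (fun e => (π e : ℕ)) d = y) =
      #(A.filter fun π => owner vert (fun e => (π e : ℕ)) d = x) := by
    intro y hy
    have hswap {a b : E} (hb : b ∈ P) (π : E ≃ Fin m) :
        π ∈ A.filter (fun π => owner vert (fun e => (π e : ℕ)) d = a) →
          (Equiv.swap b a).trans π ∈ A.filter
            (fun π => owner vert (fun e => (π e : ℕ)) d = b) := by
      simp only [mem_filter, hA]
      rintro ⟨hπ, rfl⟩
      exact hπ.swap hne (hinj π) hb
    refine card_nbij' (fun π => (Equiv.swap x y).trans π) (fun π => (Equiv.swap x y).trans π)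
      (fun π => hswap hx π) (fun π => Equiv.swap_comm x y ▸ hswap hy π) ?_ ?_ <;>
      intro π _ <;> ext <;> simp
  rw [card_eq_sum_card_fiberwise fun π hπ => ((hA π).1 hπ).owner_mem (hne d) (hinj π),
    sum_congr rfl hfiber, sum_const, smul_eq_mul, mul_comm]

theorem stmt3 [DecidableEq V] [Fintype E] [DecidableEq E] {m r : ℕ}
    (vert : E → Finset V) (hne : ∀ e : E, (vert e).Nonempty)
    (hm : Fintype.card E = m) (d : E)
    (hr1 : 1 ≤ r) (hrm : r ≤ m)
    (σ : List E) (hσlen : σ.length = r - 1) (hσinj : σ.Nodup) :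
    -- `P`: the edges incident to `d` (including `d`) still free after `σ`
    let P : Finset E := (freeAfter vert σ).filter fun f => Incident vert f d
    -- the event `A`: `π (σ_i) = i` for all `i < r`, and `d` is removed from
    -- the free set at step `r` (i.e. `π (p(d)) = r` in 1-indexed steps)
    let A : Finset (E ≃ Fin m) := Finset.univ.filter fun π : E ≃ Fin m =>
      (∀ i : Fin σ.length, ((π (σ.get i)) : ℕ) = (i : ℕ)) ∧
      ((π (owner vert (fun e => (π e : ℕ)) d)) : ℕ) = r - 1
    -- `A` has positive probability
    A.Nonempty →
    -- conditioned on `A`, the matched edge `p(d)` is uniform over `P`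
    ∀ x ∈ P,
      (A.filter fun π : E ≃ Fin m => owner vert (fun e => (π e : ℕ)) d = x).card * P.card
        = A.card :=
  stmt3_general vert hne d σ hσlen
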